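/- arXiv:1306.3606 — 6 statements merged into one kernel-verified Lean document; each statement's English description precedes it below -/
import Mathlib

section
/- There is no strictly convex pentagon in the plane with vertices in ℤ², with area strictly less than 3, such that additionally for every pair of adjacent vertices the sum of the internal angles at those vertices is strictly greater than π. -/
/-!
Write `A i` and `B i` for the cross products of the `i`-th edge with the next edge and with the
edge after that. Convexity says `A i > 0`. The angle condition says that the exterior angles at
two adjacent vertices add up to less than `π`, so `B i > 0`. For lattice vertices these numbers
are integers, and so is twice the area `S`. The Plücker relation
`A i * A (i + 2) = B i * B (i + 1) + A (i + 1) * B (i + 3)` gives `A i * A (i + 2) ≥ 2`, hence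
`A i + A (i + 2) ≥ 3` for these positive integers, and `∑ A ≥ 8`. The identity
`5 * S = 3 * ∑ A + ∑ B` then gives `S ≥ 29 / 5`, so `S ≥ 6`.
-/

open EuclideanGeometry

noncomputable def cross2 (x y : EuclideanSpace ℝ (Fin 2)) : ℝ := x 0 * y 1 - x 1 * y 0

def IsLatticePoint2 (x : EuclideanSpace ℝ (Fin 2)) : Prop :=
  ∃ p : ℤ × ℤ, x = ![(p.1 : ℝ), (p.2 : ℝ)]

open Real

theorem EuclideanSpace.inner_fin_two (x y : EuclideanSpace ℝ (Fin 2)) :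
    inner ℝ x y = x 0 * y 0 + x 1 * y 1 := by
  simp [EuclideanSpace.inner_eq_star_dotProduct, dotProduct, Fin.sum_univ_two, mul_comm]

theorem cross2_mul_cross2 (a b c d : EuclideanSpace ℝ (Fin 2)) :
    cross2 a b * cross2 c d = cross2 a c * cross2 b d + cross2 b c * cross2 d a := by
  simp only [cross2]; ring

theorem cross2_mul_inner_self (u w z : EuclideanSpace ℝ (Fin 2)) :
    cross2 u z * inner ℝ w w = cross2 u w * inner ℝ w z + inner ℝ u w * cross2 w z := by
  simp only [EuclideanSpace.inner_fin_two, cross2]; ring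

theorem sin_angle_mul_norm_mul_norm_eq_abs_cross2 (x y : EuclideanSpace ℝ (Fin 2)) :
    sin (InnerProductGeometry.angle x y) * (‖x‖ * ‖y‖) = |cross2 x y| := by
  rw [InnerProductGeometry.sin_angle_mul_norm_mul_norm, ← sqrt_sq_eq_abs]
  congr 1
  simp only [EuclideanSpace.inner_fin_two, cross2]; ring

theorem ne_zero_left_of_cross2_ne_zero {x y : EuclideanSpace ℝ (Fin 2)} (h : cross2 x y ≠ 0) :
    x ≠ 0 := by
  rintro rfl; simp [cross2] at h

theorem ne_zero_right_of_cross2_ne_zero {x y : EuclideanSpace ℝ (Fin 2)} (h : cross2 x y ≠ 0) :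
    y ≠ 0 := by
  rintro rfl; simp [cross2] at h

theorem cross2_pos_of_angle_add_angle_lt_pi {u w z : EuclideanSpace ℝ (Fin 2)}
    (huw : 0 < cross2 u w) (hwz : 0 < cross2 w z)
    (h : InnerProductGeometry.angle u w + InnerProductGeometry.angle w z < π) :
    0 < cross2 u z := by
  set α := InnerProductGeometry.angle u w
  set β := InnerProductGeometry.angle w z
  have hu := norm_pos_iff.mpr (ne_zero_left_of_cross2_ne_zero huw.ne')
  have hw := norm_pos_iff.mpr (ne_zero_left_of_cross2_ne_zero hwz.ne')
  have hz := norm_pos_iff.mpr (ne_zero_right_of_cross2_ne_zero hwz.ne')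
  have hsin_α : sin α * (‖u‖ * ‖w‖) = cross2 u w := by
    rw [sin_angle_mul_norm_mul_norm_eq_abs_cross2, abs_of_pos huw]
  have hsin_β : sin β * (‖w‖ * ‖z‖) = cross2 w z := by
    rw [sin_angle_mul_norm_mul_norm_eq_abs_cross2, abs_of_pos hwz]
  have hα : 0 < α := by
    refine (InnerProductGeometry.angle_nonneg u w).lt_of_ne fun h0 => huw.ne ?_
    rw [← hsin_α, ← show (0 : ℝ) = α from h0, sin_zero, zero_mul]
  have hsin_add : 0 < sin (α + β) :=
    sin_pos_of_pos_of_lt_pi (by linarith [InnerProductGeometry.angle_nonneg w z]) h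
  have key : sin (α + β) * ((‖u‖ * ‖w‖) * (‖w‖ * ‖z‖)) = cross2 u z * inner ℝ w w := by
    rw [sin_add, cross2_mul_inner_self, ← hsin_α, ← hsin_β,
      ← InnerProductGeometry.cos_angle_mul_norm_mul_norm u w,
      ← InnerProductGeometry.cos_angle_mul_norm_mul_norm w z]
    ring
  have hprod : 0 < cross2 u z * inner ℝ w w :=
    key ▸ mul_pos hsin_add (mul_pos (mul_pos hu hw) (mul_pos hw hz))
  exact pos_of_mul_pos_left hprod real_inner_self_nonneg

theorem cross2_pos_of_pi_lt_angle_add_angle {P Q R T : EuclideanSpace ℝ (Fin 2)}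
    (hQ : 0 < cross2 (Q - P) (R - Q)) (hR : 0 < cross2 (R - Q) (T - R))
    (h : π < ∠ P Q R + ∠ Q R T) : 0 < cross2 (Q - P) (T - R) := by
  have exterior : ∀ X Y Z : EuclideanSpace ℝ (Fin 2),
      ∠ X Y Z = π - InnerProductGeometry.angle (Y - X) (Z - Y) := fun X Y Z => by
    rw [EuclideanGeometry.angle, ← InnerProductGeometry.angle_neg_left, vsub_eq_sub,
      vsub_eq_sub, neg_sub]
  rw [exterior, exterior] at h
  exact cross2_pos_of_angle_add_angle_lt_pi hQ hR (by linarith)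

theorem IsLatticePoint2.sub {x y : EuclideanSpace ℝ (Fin 2)} (hx : IsLatticePoint2 x)
    (hy : IsLatticePoint2 y) : IsLatticePoint2 (x - y) := by
  obtain ⟨p, hp⟩ := hx
  obtain ⟨q, hq⟩ := hy
  exact ⟨p - q, by rw [WithLp.ofLp_sub, hp, hq]; ext i; fin_cases i <;> simp⟩

theorem IsLatticePoint2.exists_cross2_eq {x y : EuclideanSpace ℝ (Fin 2)}
    (hx : IsLatticePoint2 x) (hy : IsLatticePoint2 y) : ∃ n : ℤ, cross2 x y = n := by
  obtain ⟨p, hp⟩ := hx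
  obtain ⟨q, hq⟩ := hy
  exact ⟨p.1 * q.2 - p.2 * q.1, by simp [cross2, hp, hq]⟩

theorem ZMod.sum_univ_five {M : Type*} [AddCommMonoid M] (f : ZMod 5 → M) :
    ∑ i, f i = f 0 + f 1 + f 2 + f 3 + f 4 :=
  Fin.sum_univ_five f

section Polygon

variable {n : ℕ} (v : ZMod n → EuclideanSpace ℝ (Fin 2))

noncomputable def twiceArea [NeZero n] : ℝ := ∑ i, cross2 (v i) (v (i + 1))

noncomputable def edgeCrossNext (i : ZMod n) : ℝ :=
  cross2 (v (i + 1) - v i) (v (i + 2) - v (i + 1))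

noncomputable def edgeCrossSkip (i : ZMod n) : ℝ :=
  cross2 (v (i + 1) - v i) (v (i + 3) - v (i + 2))

end Polygon

theorem IsLatticePoint2.exists_twiceArea_eq {n : ℕ} [NeZero n]
    {v : ZMod n → EuclideanSpace ℝ (Fin 2)} (hv : ∀ i, IsLatticePoint2 (v i)) :
    ∃ S : ℤ, twiceArea v = S := by
  choose s hs using fun i => (hv i).exists_cross2_eq (hv (i + 1))
  exact ⟨∑ i, s i, by simp [twiceArea, hs]⟩

section Pentagon

variable (v : ZMod 5 → EuclideanSpace ℝ (Fin 2))

theorem five_mul_twiceArea :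
    5 * twiceArea v = 3 * ∑ i, edgeCrossNext v i + ∑ i, edgeCrossSkip v i := by
  simp only [twiceArea, edgeCrossNext, edgeCrossSkip, ZMod.sum_univ_five]
  reduce_mod_char
  simp only [cross2, PiLp.add_apply, PiLp.neg_apply]
  ring

theorem edgeCrossNext_mul_edgeCrossNext (i : ZMod 5) :
    edgeCrossNext v i * edgeCrossNext v (i + 2) =
      edgeCrossSkip v i * edgeCrossSkip v (i + 1) +
        edgeCrossNext v (i + 1) * edgeCrossSkip v (i + 3) := by
  simp only [edgeCrossNext, edgeCrossSkip, add_assoc]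
  reduce_mod_char
  simp only [← sub_eq_add_neg]
  exact cross2_mul_cross2 _ _ _ _

end Pentagon

theorem six_le_of_pentagon_relations {S : ℤ} {A B : ZMod 5 → ℤ} (hA : ∀ i, 0 < A i)
    (hB : ∀ i, 0 < B i) (hS : 5 * S = 3 * ∑ i, A i + ∑ i, B i)
    (hP : ∀ i, A i * A (i + 2) = B i * B (i + 1) + A (i + 1) * B (i + 3)) : 6 ≤ S := by
  have hpair : ∀ i, 3 ≤ A i + A (i + 2) := by
    intro i
    by_contra! h
    obtain ⟨h1, h2⟩ : A i = 1 ∧ A (i + 2) = 1 := by have := hA i; have := hA (i + 2); omega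
    have := hP i
    rw [h1, h2] at this
    nlinarith [mul_pos (hB i) (hB (i + 1)), mul_pos (hA (i + 1)) (hB (i + 3))]
  have hshift : ∑ i, A (i + 2) = ∑ i, A i := Equiv.sum_comp (Equiv.addRight (2 : ZMod 5)) A
  have hsumA : 15 ≤ 2 * ∑ i, A i := by
    calc (15 : ℤ) = ∑ _i : ZMod 5, 3 := by simp
      _ ≤ ∑ i, (A i + A (i + 2)) := Finset.sum_le_sum fun i _ => hpair i
      _ = 2 * ∑ i, A i := by rw [Finset.sum_add_distrib, hshift, two_mul]
  have hsumB : 5 ≤ ∑ i, B i := by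
    calc (5 : ℤ) = ∑ _i : ZMod 5, 1 := by simp
      _ ≤ ∑ i, B i := Finset.sum_le_sum fun i _ => hB i
  omega

theorem six_le_twiceArea {v : ZMod 5 → EuclideanSpace ℝ (Fin 2)}
    (hv : ∀ i, IsLatticePoint2 (v i)) (hnext : ∀ i, 0 < edgeCrossNext v i)
    (hskip : ∀ i, 0 < edgeCrossSkip v i) : 6 ≤ twiceArea v := by
  have hedge : ∀ i j, IsLatticePoint2 (v j - v i) := fun i j => (hv j).sub (hv i)
  choose A hA using fun i => (hedge i (i + 1)).exists_cross2_eq (hedge (i + 1) (i + 2))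
  choose B hB using fun i => (hedge i (i + 1)).exists_cross2_eq (hedge (i + 2) (i + 3))
  obtain ⟨S, hS⟩ := IsLatticePoint2.exists_twiceArea_eq hv
  change ∀ i, edgeCrossNext v i = A i at hA
  change ∀ i, edgeCrossSkip v i = B i at hB
  rw [hS]
  exact_mod_cast six_le_of_pentagon_relations (S := S) (A := A) (B := B)
    (fun i => by exact_mod_cast hA i ▸ hnext i) (fun i => by exact_mod_cast hB i ▸ hskip i)
    (by have := five_mul_twiceArea v; simp only [hA, hB, hS] at this; exact_mod_cast this)
    (fun i => by
      have := edgeCrossNext_mul_edgeCrossNext v i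
      simp only [hA, hB] at this
      exact_mod_cast this)

/-- There is no strictly convex pentagon in the plane with vertices in `ℤ²`,
with area strictly less than 3, such that for every pair of adjacent vertices the sum of the
internal angles at those vertices is strictly greater than `π`. -/
theorem no_small_lattice_pentagon_with_adjacent_angles :
    ¬ ∃ v : ZMod 5 → EuclideanSpace ℝ (Fin 2),
      (∀ i, IsLatticePoint2 (v i)) ∧
      (∀ i, v (i + 1) - v i ≠ 0) ∧
      (∀ i, 0 < cross2 (v (i + 1) - v i) (v (i + 2) - v (i + 1))) ∧
      (∀ i, v i ∉ convexHull ℝ (v '' {j | j ≠ i})) ∧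
      ((1 / 2) * ∑ i : ZMod 5, cross2 (v i) (v (i + 1)) < 3) ∧
      (∀ i : ZMod 5,
        Real.pi < ∠ (v (i - 1)) (v i) (v (i + 1)) + ∠ (v i) (v (i + 1)) (v (i + 2))) := by
  rintro ⟨v, hlat, -, hconvex, -, harea, hangle⟩
  have hskip : ∀ i, 0 < edgeCrossSkip v i := fun i => by
    have h1 := hconvex (i + 1)
    have h2 := hangle (i + 1)
    simp only [add_sub_cancel_right, add_assoc, one_add_one_eq_two,
      show (1 + 2 : ZMod 5) = 3 by decide] at h1 h2
    exact cross2_pos_of_pi_lt_angle_add_angle (hconvex i) h1 h2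
  have h6 := six_le_twiceArea hlat hconvex hskip
  rw [twiceArea] at h6
  linarith
end

section
/- For every integer κ ≥ 7 and every even integer D with (2κ)² < D ≤ (2κ+2)², setting e = 2κ−6, b = (D−e²)/4, λ = (e+√D)/2, and letting a be the unique integer in the interval [(b+λ)/3 − 1, (b+λ)/3), the following all hold: b−λ < 2a < b, 3a > b, a > λ, λ + a < b, and 3a − b < λ. -/
/-- For every integer `κ ≥ 7` and even `D` with `(2κ)² < D ≤ (2κ+2)²`, setting
`e = 2κ−6`, `b = (D−e²)/4`, `λ = (e+√D)/2`, and letting `a` be the unique integer in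
`[(b+λ)/3 − 1, (b+λ)/3)`, we have `b−λ < 2a < b`, `3a > b`, `a > λ`, `λ + a < b`, and
`3a − b < λ`. -/
theorem prototype_computation_even_iii_vii
    (κ D : ℕ) (hκ : 7 ≤ κ) (hD : Even D)
    (h1 : (2 * κ) ^ 2 < D) (h2 : D ≤ (2 * κ + 2) ^ 2)
    (e b lam : ℝ)
    (he : e = 2 * (κ : ℝ) - 6)
    (hb : b = ((D : ℝ) - e ^ 2) / 4)
    (hlam : lam = (e + Real.sqrt D) / 2)
    (a : ℤ)
    (ha1 : (b + lam) / 3 - 1 ≤ (a : ℝ)) (ha2 : (a : ℝ) < (b + lam) / 3) :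
    (b - lam < 2 * (a : ℝ) ∧ 2 * (a : ℝ) < b) ∧
    b < 3 * (a : ℝ) ∧
    lam < (a : ℝ) ∧
    lam + (a : ℝ) < b ∧
    3 * (a : ℝ) - b < lam := by
  have hκR : (7:ℝ) ≤ (κ:ℝ) := by exact_mod_cast hκ
  have hD1 : (2*(κ:ℝ))^2 < (D:ℝ) := by exact_mod_cast h1
  have hD2 : (D:ℝ) ≤ (2*(κ:ℝ)+2)^2 := by exact_mod_cast h2
  have hs1 : 2*(κ:ℝ) < Real.sqrt D := by
    exact (Real.lt_sqrt (by positivity)).mpr hD1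
  have hs2 : Real.sqrt D ≤ 2*(κ:ℝ)+2 := by
    rw [show (2*(κ:ℝ)+2) = Real.sqrt ((2*(κ:ℝ)+2)^2) from
      (Real.sqrt_sq (by positivity)).symm]
    exact Real.sqrt_le_sqrt hD2
  have hb1 : 6*(κ:ℝ) - 9 < b := by rw [hb, he]; nlinarith
  have hb2 : b ≤ 8*(κ:ℝ) - 8 := by rw [hb, he]; nlinarith
  have hl1 : 2*(κ:ℝ) - 3 < lam := by rw [hlam, he]; linarith
  have hl2 : lam ≤ 2*(κ:ℝ) - 2 := by rw [hlam, he]; linarith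
  refine ⟨⟨by linarith, by linarith⟩, by linarith, by linarith, by linarith, by linarith⟩
end

section
/- For any integers κ ≥ 7, even D with (2κ)² < D ≤ (2κ+2)², with e = 2κ−6, b = (D−e²)/4, c = 1, and a the unique integer in [(b+λ)/3 − 1, (b+λ)/3) where λ = (e+√D)/2, the quadruple (a,b,c,e) satisfies gcd(a,b,c,e) = 1, D = e² + 4bc, b > 0, c > 0, c + e < b, and 0 ≤ a < b. -/
/-- For integers `κ ≥ 7` and even `D` with `(2κ)² < D ≤ (2κ+2)²`, the quadruple
`(a, b, 1, e)` with `e = 2κ−6`, `b = (D−e²)/4` and `a` the unique integer in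
`[(b+λ)/3 − 1, (b+λ)/3)` where `λ = (e+√D)/2`, is a valid prototype: `gcd(a,b,1,e) = 1`,
`D = e² + 4·b·1`, `b > 0`, `1 > 0`, `1 + e < b`, and `0 ≤ a < b`. -/
theorem explicit_prototype_valid
    (κ D : ℕ) (hκ : 7 ≤ κ) (hD : Even D)
    (h1 : (2 * κ) ^ 2 < D) (h2 : D ≤ (2 * κ + 2) ^ 2)
    (e b a : ℤ) (lam : ℝ)
    (he : e = 2 * (κ : ℤ) - 6)
    (hb : 4 * b = (D : ℤ) - e ^ 2)
    (hlam : lam = ((e : ℝ) + Real.sqrt D) / 2)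
    (ha1 : ((b : ℝ) + lam) / 3 - 1 ≤ (a : ℝ)) (ha2 : (a : ℝ) < ((b : ℝ) + lam) / 3) :
    Int.gcd a (Int.gcd b (Int.gcd 1 e)) = 1 ∧
    (D : ℤ) = e ^ 2 + 4 * b * 1 ∧
    0 < b ∧ (0 : ℤ) < 1 ∧
    1 + e < b ∧
    0 ≤ a ∧ a < b := by
  have hκ' : (7 : ℤ) ≤ (κ : ℤ) := by exact_mod_cast hκ
  -- D ≥ (2κ)² + 2 since both even
  have h1' : ((2 * κ) ^ 2 : ℤ) < (D : ℤ) := by exact_mod_cast h1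
  have h2' : ((D : ℤ)) ≤ ((2 * κ + 2) ^ 2 : ℤ) := by exact_mod_cast h2
  have hDge : ((2 * κ) ^ 2 : ℤ) + 2 ≤ (D : ℤ) := by
    obtain ⟨k, hk⟩ := hD
    have hDk : (D : ℤ) = (k : ℤ) + (k : ℤ) := by exact_mod_cast hk
    have hm : ((2 * κ) ^ 2 : ℕ) = 4 * (κ * κ) := by ring
    have hm' : ((2 * κ) ^ 2 : ℤ) = 4 * ((κ : ℤ) * κ) := by exact_mod_cast hm
    omega
  have hbpos : 0 < b := by nlinarith [hb, he]
  have hbge : 4 * b ≥ 24 * (κ : ℤ) - 34 := by nlinarith [hb, he]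
  have hlt : 1 + e < b := by nlinarith
  -- real bounds
  have hsD : Real.sqrt D ≤ 2 * (κ : ℝ) + 2 := by
    have h0 : (0:ℝ) ≤ 2 * (κ : ℝ) + 2 := by positivity
    have := Real.sqrt_le_sqrt (by exact_mod_cast h2 : (D : ℝ) ≤ ((2 * κ + 2) ^ 2 : ℕ))
    calc Real.sqrt D ≤ Real.sqrt (((2 * κ + 2) ^ 2 : ℕ)) := this
      _ = 2 * (κ : ℝ) + 2 := by
          push_cast
          rw [Real.sqrt_sq h0]
  have hsD0 : 0 ≤ Real.sqrt D := Real.sqrt_nonneg _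
  have hκR : (7 : ℝ) ≤ (κ : ℝ) := by exact_mod_cast hκ
  have heR : (e : ℝ) = 2 * (κ : ℝ) - 6 := by exact_mod_cast he
  have hbR : 24 * (κ : ℝ) - 34 ≤ 4 * (b : ℝ) := by exact_mod_cast hbge
  have hlampos : 0 < lam := by rw [hlam]; nlinarith
  have ha0 : (0 : ℤ) ≤ a := by
    have : (-1 : ℝ) < (a : ℝ) := by
      have hbR0 : (0:ℝ) < (b:ℝ) := by exact_mod_cast hbpos
      nlinarith
    have h' : (-1 : ℤ) < a := by exact_mod_cast this
    omega
  have hab : a < b := by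
    have hlamlt : lam < 2 * (b : ℝ) := by
      rw [hlam]; nlinarith
    have : (a : ℝ) < (b : ℝ) := by nlinarith
    exact_mod_cast this
  refine ⟨by simp, by linarith, hbpos, by norm_num, hlt, ha0, hab⟩
end

section
/- For a rectangle R in the plane of area strictly less than 4 with corners at integer points and horizontal top and bottom edges, and for any direction v of a generalized diagonal of R (a vector from an integer point on the bottom edge to an integer point on the top edge, possibly after horizontal translation by integer multiples of the width), a straight line through an integer point in direction v meets the union of the top and bottom edges of R in at most 3 points. -/
/-- For a rectangle `[0,w] × [0,h]` with integer side lengths and area `wh < 4`,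
and a generalized-diagonal direction `(p, h)` with `p : ℤ`, a straight line through an integer
point `q` in direction `(p, h)` meets the union of the top and bottom edges of the rectangle,
taken modulo `w` in the horizontal direction (i.e. on the cylinder `ℝ/wℤ × [0,h]`, whose two
boundary circles are the images of the horizontal lines at integer multiples of `h`), in at
most 3 points. -/
theorem line_meets_cylinder_boundary_in_at_most_three_points
    (w h : ℕ) (hw : 0 < w) (hh : 0 < h) (harea : w * h < 4)
    (p : ℤ) (q : ℤ × ℤ) :
    let S : Set ℝ := {x : ℝ | ∃ t : ℝ,
      (∃ k : ℤ, (q.2 : ℝ) + t * h = k * h) ∧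
      x = Int.fract (((q.1 : ℝ) + t * p) / w) * w}
    S.Finite ∧ S.ncard ≤ 3 := by
  intro S
  set T : Finset ℝ := (Finset.range (w * h)).image (fun n : ℕ => (n : ℝ) / h) with hT
  have hw' : (0:ℝ) < w := by exact_mod_cast hw
  have hh' : (0:ℝ) < h := by exact_mod_cast hh
  have hSsub : S ⊆ ↑T := by
    rintro x ⟨t, ⟨k, hk⟩, hx⟩
    have ht : t = (k : ℝ) - q.2 / h := by
      field_simp
      linear_combination hk
    set N : ℤ := q.1 * h - q.2 * p + k * (p * h) with hN
    have hxn : ((q.1:ℝ) + t * p) / w = (N:ℝ) / ((w * h : ℕ) : ℝ) := by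
      rw [ht, hN]
      push_cast
      field_simp
      ring
    rw [hxn, Int.fract_div_intCast_eq_div_intCast_mod] at hx
    have hwh : 0 < (w * h : ℤ) := by positivity
    have hmodlt : N % ((w * h : ℕ):ℤ) < (w * h : ℕ) := Int.emod_lt_of_pos N (by exact_mod_cast hwh)
    have hmodnn : 0 ≤ N % ((w * h : ℕ):ℤ) := Int.emod_nonneg N (by push_cast; positivity)
    simp only [hT, Finset.coe_image, Set.mem_image, Finset.mem_coe, Finset.mem_range]
    refine ⟨(N % ((w * h : ℕ):ℤ)).toNat, by push_cast at hmodlt ⊢; omega, ?_⟩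
    rw [hx]
    have hcast : ((N % ((w * h : ℕ):ℤ)).toNat : ℝ) = ((N % ((w * h : ℕ):ℤ) : ℤ) : ℝ) := by
      exact_mod_cast congrArg (fun z : ℤ => (z:ℝ)) (Int.toNat_of_nonneg hmodnn)
    rw [hcast]
    push_cast
    field_simp
  have hwh3 : w * h ≤ 3 := by omega
  refine ⟨Set.Finite.subset T.finite_toSet hSsub, ?_⟩
  calc S.ncard ≤ (↑T : Set ℝ).ncard := Set.ncard_le_ncard hSsub T.finite_toSet
    _ = T.card := Set.ncard_coe_finset T
    _ ≤ (Finset.range (w * h)).card := Finset.card_image_le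
    _ = w * h := Finset.card_range _
    _ ≤ 3 := hwh3
end

section
/- Let v_1 = (0,1), v_2 = (0,0), v_3 = (1,0), v_4 = (m,n), v_5 = (k,ℓ) be vertices (in counterclockwise order) of a strictly convex pentagon with m,n,k,ℓ integers. If the adjacent-angles inequalities m > 1, n > 0, k > 0, ℓ > 1, ℓ > n, m > k, and nk > (m−1)(ℓ−1) all hold, then a contradiction follows; in particular no such integer pentagon exists. -/
/-- If integers `m, n, k, ℓ` (coming from vertices `(0,1), (0,0), (1,0), (m,n),
(k,ℓ)` of a strictly convex pentagon) satisfy the adjacent-angles inequalities `m > 1`,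
`n > 0`, `k > 0`, `ℓ > 1`, `ℓ > n`, `m > k` and `nk > (m−1)(ℓ−1)`, then a contradiction
follows; in particular no such integer pentagon exists. -/
theorem pentagon_inequalities_contradiction
    (m n k l : ℤ)
    (h1 : 1 < m) (h2 : 0 < n) (h3 : 0 < k) (h4 : 1 < l)
    (h5 : n < l) (h6 : k < m) (h7 : (m - 1) * (l - 1) < n * k) :
    False := by
  nlinarith [mul_le_mul (show n ≤ l-1 by omega) (show k ≤ m-1 by omega) h3.le (by omega : (0:ℤ) ≤ l-1)]
end

section
/- Suppose P is a convex 2n-gon (n ≥ 4) with edges e_1,...,e_{2n} in counterclockwise order, with direction angles θ_1 ≤ θ_2 ≤ ... ≤ θ_{2n} (mod 2π), in which edge e_j is identified with a parallel edge e_k, k = k(j), with θ_k = θ_j + π, and suppose there is an index j with k(j) = j+3 and θ_{j+1} = θ_{j+2}. Then the angles θ_i take only the four values θ_j, θ_{j+1}, θ_j + π, θ_{j+1} + π; i.e. P is a parallelogram (every edge is parallel to one of two directions). -/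
private lemma mono_ext (θ : ℕ → ℝ) (hmono : ∀ i, θ i ≤ θ (i + 1)) :
    ∀ a b : ℕ, a ≤ b → θ a ≤ θ b := by
  intro a b hab
  induction b with
  | zero => simp_all
  | succ b ih =>
    rcases Nat.lt_or_ge a (b + 1) with h | h
    · exact le_trans (ih (Nat.lt_succ_iff.mp h)) (hmono b)
    · have : a = b + 1 := le_antisymm hab h
      simp [this]

private lemma per_ext (n : ℕ) (θ : ℕ → ℝ)
    (hper : ∀ i, θ (i + 2 * n) = θ i + 2 * Real.pi) :
    ∀ a t : ℕ, θ (a + 2 * n * t) = θ a + 2 * Real.pi * t := by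
  intro a t
  induction t with
  | zero => simp
  | succ t ih =>
    have h : a + 2 * n * (t + 1) = (a + 2 * n * t) + 2 * n := by ring
    rw [h, hper, ih]
    push_cast
    ring

private lemma cong_lemma (n : ℕ) (θ : ℕ → ℝ)
    (hper : ∀ i, θ (i + 2 * n) = θ i + 2 * Real.pi) :
    ∀ a b : ℕ, a ≡ b [MOD 2 * n] → ∃ m : ℤ, θ a = θ b + 2 * Real.pi * m := by
  intro a b hab
  have ha : θ a = θ (a % (2 * n)) + 2 * Real.pi * ((a / (2 * n) : ℕ) : ℝ) := by
    conv_lhs => rw [← Nat.mod_add_div a (2 * n)]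
    exact per_ext n θ hper _ _
  have hb : θ b = θ (b % (2 * n)) + 2 * Real.pi * ((b / (2 * n) : ℕ) : ℝ) := by
    conv_lhs => rw [← Nat.mod_add_div b (2 * n)]
    exact per_ext n θ hper _ _
  have hab' : a % (2 * n) = b % (2 * n) := hab
  refine ⟨((a / (2 * n) : ℕ) : ℤ) - ((b / (2 * n) : ℕ) : ℤ), ?_⟩
  rw [ha, hb, hab']
  simp only [Int.cast_sub, Int.cast_natCast]
  ring

private lemma kper_ext (n : ℕ) (k : ℕ → ℕ)
    (hkper : ∀ i, k (i + 2 * n) = k i + 2 * n) :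
    ∀ a t : ℕ, k (a + 2 * n * t) = k a + 2 * n * t := by
  intro a t
  induction t with
  | zero => simp
  | succ t ih =>
    have h : a + 2 * n * (t + 1) = (a + 2 * n * t) + 2 * n := by ring
    rw [h, hkper, ih]
    ring

private lemma kcong (n : ℕ) (k : ℕ → ℕ)
    (hkper : ∀ i, k (i + 2 * n) = k i + 2 * n) :
    ∀ a b : ℕ, a ≡ b [MOD 2 * n] → k a ≡ k b [MOD 2 * n] := by
  have h : ∀ c : ℕ, k c ≡ k (c % (2 * n)) [MOD 2 * n] := by
    intro c
    have kc : k c = k (c % (2 * n)) + 2 * n * (c / (2 * n)) := by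
      conv_lhs => rw [← Nat.mod_add_div c (2 * n)]
      exact kper_ext n k hkper _ _
    rw [kc]
    have h0 : 2 * n * (c / (2 * n)) ≡ 0 [MOD 2 * n] :=
      (Nat.modEq_zero_iff_dvd).mpr (Dvd.intro _ rfl)
    simpa using (Nat.ModEq.add_left (k (c % (2 * n))) h0)
  intro a b hab
  have hab' : a % (2 * n) = b % (2 * n) := hab
  calc k a ≡ k (a % (2 * n)) [MOD 2 * n] := h a
    _ = k (b % (2 * n)) := by rw [hab']
    _ ≡ k b [MOD 2 * n] := (h b).symm

private lemma lift_lemma (N : ℕ) (hN : 0 < N) (a b : ℕ) :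
    ∃ s, s < N ∧ a ≡ b + s [MOD N] := by
  have hb : b ≤ N * (b + 1) := by
    calc b ≤ 1 * (b + 1) := by omega
      _ ≤ N * (b + 1) := Nat.mul_le_mul_right _ hN
  refine ⟨(a + N * (b + 1) - b) % N, Nat.mod_lt _ hN, ?_⟩
  have h1 : b + (a + N * (b + 1) - b) = a + N * (b + 1) := by omega
  have h2 : b + (a + N * (b + 1) - b) % N ≡ b + (a + N * (b + 1) - b) [MOD N] :=
    Nat.ModEq.add_left b (Nat.mod_modEq _ _)
  have h3 : a + N * (b + 1) ≡ a [MOD N] := by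
    have h0 : N * (b + 1) ≡ 0 [MOD N] := (Nat.modEq_zero_iff_dvd).mpr (Dvd.intro _ rfl)
    simpa using Nat.ModEq.add_left a h0
  calc a ≡ a + N * (b + 1) [MOD N] := h3.symm
    _ = b + (a + N * (b + 1) - b) := h1.symm
    _ ≡ b + (a + N * (b + 1) - b) % N [MOD N] := h2.symm

/-- Suppose `P` is a convex `2n`-gon (`n ≥ 4`) with edge direction angles
`θ 0, θ 1, ...` (lifted to a real-valued sequence with `θ (i + 2n) = θ i + 2π`, so total
turning is `2π`), weakly monotone with steps less than `π` (convexity), equipped with an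
edge identification `k` that is a fixed-point-free involution mod `2n` with
`θ (k i) ≡ θ i + π (mod 2π)`, and suppose there is `j` with `k j ≡ j + 3 (mod 2n)` and
`θ (j+1) = θ (j+2)`. Then every `θ i` is congruent mod `π` to `θ j` or `θ (j+1)`; i.e. the
angles take only the four values `θ j, θ (j+1), θ j + π, θ (j+1) + π` mod `2π`, so `P` is a
parallelogram. -/
theorem convex_polygon_four_directions
    (n : ℕ) (hn : 4 ≤ n) (θ : ℕ → ℝ)
    (hper : ∀ i, θ (i + 2 * n) = θ i + 2 * Real.pi)
    (hmono : ∀ i, θ i ≤ θ (i + 1))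
    (hstep : ∀ i, θ (i + 1) < θ i + Real.pi)
    (k : ℕ → ℕ)
    (hkper : ∀ i, k (i + 2 * n) = k i + 2 * n)
    (hkinv : ∀ i, k (k i) ≡ i [MOD 2 * n])
    (hkfix : ∀ i, ¬ (k i ≡ i [MOD 2 * n]))
    (hpair : ∀ i, ∃ m : ℤ, θ (k i) = θ i + Real.pi + 2 * Real.pi * m)
    (j : ℕ) (hj : k j ≡ j + 3 [MOD 2 * n])
    (heq : θ (j + 1) = θ (j + 2)) :
    ∀ i, (∃ m : ℤ, θ i = θ j + m * Real.pi) ∨ (∃ m : ℤ, θ i = θ (j + 1) + m * Real.pi) := by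
  have hπ : (0:ℝ) < Real.pi := Real.pi_pos
  have hN : 0 < 2 * n := by omega
  have hmono' := mono_ext θ hmono
  have hcong := cong_lemma n θ hper
  -- Step A: θ (j+3) = θ j + π
  have θ3 : θ (j + 3) = θ j + Real.pi := by
    obtain ⟨m1, hm1⟩ := hpair j
    obtain ⟨m2, hm2⟩ := hcong (k j) (j + 3) hj
    have hlow : θ j ≤ θ (j + 3) := hmono' j (j + 3) (by omega)
    have hup : θ (j + 3) < θ j + 2 * Real.pi := by
      have h1 := hstep (j + 2)
      have h2 := hstep j
      have : j + 2 + 1 = j + 3 := by omega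
      rw [this] at h1
      linarith [heq]
    have hE : θ (j + 3) = θ j + Real.pi + 2 * Real.pi * ((m1 - m2 : ℤ) : ℝ) := by
      have : θ (j + 3) + 2 * Real.pi * m2 = θ j + Real.pi + 2 * Real.pi * m1 := by
        rw [← hm2, hm1]
      push_cast
      linarith
    have hb1 : (0:ℝ) ≤ Real.pi * (1 + 2 * ((m1 - m2 : ℤ) : ℝ)) := by nlinarith [hE, hlow]
    have hb2 : Real.pi * (1 + 2 * ((m1 - m2 : ℤ) : ℝ)) < 2 * Real.pi := by nlinarith [hE, hup]
    have hi1 : (0:ℝ) ≤ 1 + 2 * ((m1 - m2 : ℤ) : ℝ) := nonneg_of_mul_nonneg_right hb1 hπ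
    have hi2 : (1:ℝ) + 2 * ((m1 - m2 : ℤ) : ℝ) < 2 := by nlinarith
    have hz1 : (0:ℤ) ≤ 1 + 2 * (m1 - m2) := by exact_mod_cast hi1
    have hz2 : (1:ℤ) + 2 * (m1 - m2) < 2 := by exact_mod_cast hi2
    have : m1 - m2 = 0 := by omega
    rw [hE, this]
    push_cast
    ring
  have θ2n : θ (j + 2 * n) = θ j + 2 * Real.pi := hper j
  -- Step B: the key claim for indices j + r, r < 2n
  have key : ∀ r, r < 2 * n →
      (∃ m : ℤ, θ (j + r) = θ j + m * Real.pi) ∨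
      (∃ m : ℤ, θ (j + r) = θ (j + 1) + m * Real.pi) := by
    intro r hr
    rcases Nat.lt_or_ge r 4 with h4 | h4
    · interval_cases r
      · exact Or.inl ⟨0, by simp⟩
      · exact Or.inr ⟨0, by simp⟩
      · exact Or.inr ⟨0, by rw [← heq]; simp⟩
      · exact Or.inl ⟨1, by rw [θ3]; ring⟩
    · -- r ≥ 4
      obtain ⟨u, hu_lt, hu⟩ := lift_lemma (2 * n) hN (k (j + r)) j
      obtain ⟨m1, hm1⟩ := hpair (j + r)
      obtain ⟨m2, hm2⟩ := hcong (k (j + r)) (j + u) hu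
      have hE : θ (j + u) = θ (j + r) + Real.pi + 2 * Real.pi * ((m1 - m2 : ℤ) : ℝ) := by
        have : θ (j + u) + 2 * Real.pi * m2 = θ (j + r) + Real.pi + 2 * Real.pi * m1 := by
          rw [← hm2, hm1]
        push_cast
        linarith
      have hkjr : k (k (j + r)) ≡ k (j + u) [MOD 2 * n] := kcong n k hkper _ _ hu
      have hju : j + r ≡ k (j + u) [MOD 2 * n] := (hkinv (j + r)).symm.trans hkjr
      rcases Nat.lt_or_ge u 4 with hu4 | hu4
      · interval_cases u
        · -- u = 0 : k (j+r) ≡ j, so j + r ≡ j + 3, contradiction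
          exfalso
          have h1 : j + r ≡ j + 3 [MOD 2 * n] := by
            have := hju.trans (by simpa using hj)
            simpa using this
          have h2 : r ≡ 3 [MOD 2 * n] := Nat.ModEq.add_left_cancel' j h1
          have h3 : r % (2 * n) = 3 % (2 * n) := h2
          rw [Nat.mod_eq_of_lt hr, Nat.mod_eq_of_lt (by omega)] at h3
          omega
        · -- u = 1
          refine Or.inr ⟨-(1 + 2 * (m1 - m2)), ?_⟩
          have := hE
          push_cast at this ⊢
          linarith
        · -- u = 2
          refine Or.inr ⟨-(1 + 2 * (m1 - m2)), ?_⟩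
          rw [heq]
          have := hE
          push_cast at this ⊢
          linarith
        · -- u = 3 : k (j+r) ≡ j + 3 ≡ k j, so j + r ≡ j, contradiction
          exfalso
          have hkj3 : k (j + 3) ≡ j [MOD 2 * n] := (kcong n k hkper _ _ hj).symm.trans (hkinv j)
          have h1 : j + r ≡ j + 0 [MOD 2 * n] := by
            have := hju.trans hkj3
            simpa using this
          have h2 : r ≡ 0 [MOD 2 * n] := Nat.ModEq.add_left_cancel' j h1
          have h3 : r % (2 * n) = 0 % (2 * n) := h2
          rw [Nat.mod_eq_of_lt hr, Nat.mod_eq_of_lt (by omega)] at h3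
          omega
      · -- u ≥ 4 : both angles in [θ j + π, θ j + 2π]
        have hrl : θ j + Real.pi ≤ θ (j + r) := by
          rw [← θ3]; exact hmono' _ _ (by omega)
        have hru : θ (j + r) ≤ θ j + 2 * Real.pi := by
          rw [← θ2n]; exact hmono' _ _ (by omega)
        have hul : θ j + Real.pi ≤ θ (j + u) := by
          rw [← θ3]; exact hmono' _ _ (by omega)
        have huu : θ (j + u) ≤ θ j + 2 * Real.pi := by
          rw [← θ2n]; exact hmono' _ _ (by omega)
        have hb1 : -Real.pi ≤ Real.pi * (1 + 2 * ((m1 - m2 : ℤ) : ℝ)) := by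
          nlinarith [hE]
        have hb2 : Real.pi * (1 + 2 * ((m1 - m2 : ℤ) : ℝ)) ≤ Real.pi := by
          nlinarith [hE]
        have hi1 : (-1:ℝ) ≤ 1 + 2 * ((m1 - m2 : ℤ) : ℝ) := by nlinarith
        have hi2 : (1:ℝ) + 2 * ((m1 - m2 : ℤ) : ℝ) ≤ 1 := by nlinarith
        have hz1 : (-1:ℤ) ≤ 1 + 2 * (m1 - m2) := by exact_mod_cast hi1
        have hz2 : (1:ℤ) + 2 * (m1 - m2) ≤ 1 := by exact_mod_cast hi2
        have hM : m1 - m2 = 0 ∨ m1 - m2 = -1 := by omega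
        rcases hM with hM | hM
        · -- θ (j+u) = θ (j+r) + π, so θ (j+r) = θ j + π
          refine Or.inl ⟨1, ?_⟩
          rw [hM] at hE
          push_cast at hE ⊢
          linarith
        · -- θ (j+u) = θ (j+r) - π, so θ (j+r) = θ j + 2π
          refine Or.inl ⟨2, ?_⟩
          rw [hM] at hE
          push_cast at hE ⊢
          linarith
  -- Step C: reduce arbitrary i to j + r
  intro i
  obtain ⟨r, hr, hir⟩ := lift_lemma (2 * n) hN i j
  obtain ⟨m, hm⟩ := hcong i (j + r) hir
  rcases key r hr with ⟨m', h'⟩ | ⟨m', h'⟩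
  · exact Or.inl ⟨m' + 2 * m, by rw [hm, h']; push_cast; ring⟩
  · exact Or.inr ⟨m' + 2 * m, by rw [hm, h']; push_cast; ring⟩
end
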